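/- Let P be a patch contained in some tiling of Ω, let t₁, t₂ ∈ P with x(t₁) = 0, let r > 0 be such that supp(P) ⊆ B_r(0), and set Y = {T(B_r(0)) : T ∈ U(P, t₁)}. Then Y is a finite set of patches, and V(P, t₁, t₂) is the disjoint union of the sets V(P', t₁, t₂) for P' ∈ Y. -/

import Mathlib

open Metric Set Pointwise

noncomputable section

/-- Points of `ℝ^d`. -/
abbrev Pt (d : ℕ) := EuclideanSpace ℝ (Fin d)

/-- A (possibly labelled) tile in `ℝ^d`: a subset of `ℝ^d` together with a label. -/
structure Tile (d : ℕ) where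
  carrier : Set (Pt d)
  label : ℕ

instance {d : ℕ} : Inhabited (Tile d) := ⟨⟨∅, 0⟩⟩

/-- Translate of a tile by a vector. -/
def Tile.translate {d : ℕ} (t : Tile d) (x : Pt d) : Tile d :=
  ⟨(fun y => y + x) '' t.carrier, t.label⟩

/-- A tile proper: homeomorphic to the closed unit ball. -/
def Tile.IsTile {d : ℕ} (t : Tile d) : Prop :=
  Nonempty (t.carrier ≃ₜ (Metric.closedBall (0 : Pt d) 1))

/-- Support of a partial tiling: the union of its tiles. -/
def psupp {d : ℕ} (P : Set (Tile d)) : Set (Pt d) := ⋃ t ∈ P, t.carrier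

/-- `tilesAt P U` = the tiles of `P` meeting `U`, written `P(U)` in the paper. -/
def tilesAt {d : ℕ} (P : Set (Tile d)) (U : Set (Pt d)) : Set (Tile d) :=
  {t ∈ P | (t.carrier ∩ U).Nonempty}

/-- Translate of a collection of tiles. -/
def translateSet {d : ℕ} (P : Set (Tile d)) (x : Pt d) : Set (Tile d) :=
  (fun t => t.translate x) '' P

/-- A partial tiling: tiles with pairwise disjoint interiors. -/
def IsPartialTiling {d : ℕ} (P : Set (Tile d)) : Prop :=
  (∀ t ∈ P, t.IsTile) ∧
  ∀ t ∈ P, ∀ t' ∈ P, t ≠ t' → interior t.carrier ∩ interior t'.carrier = ∅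

/-- A patch: a finite partial tiling. -/
def IsPatch {d : ℕ} (P : Set (Tile d)) : Prop := IsPartialTiling P ∧ P.Finite

/-- A tiling of all of `ℝ^d`. -/
def IsTilingOfSpace {d : ℕ} (P : Set (Tile d)) : Prop :=
  IsPartialTiling P ∧ psupp P = univ

/-- A substitution tiling system `(𝒫, ω)` with inflation constant `λ > 1`. -/
structure SubstSystem (d : ℕ) where
  proto : Set (Tile d)
  proto_finite : proto.Finite
  proto_nonempty : proto.Nonempty
  proto_isTile : ∀ p ∈ proto, p.IsTile
  proto_zero_mem : ∀ p ∈ proto, (0 : Pt d) ∈ interior p.carrier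
  proto_no_translate : ∀ p ∈ proto, ∀ q ∈ proto, ∀ x : Pt d,
    q = p.translate x → p = q ∧ x = 0
  lam : ℝ
  one_lt_lam : 1 < lam
  sub : Tile d → Set (Tile d)
  sub_patch : ∀ p ∈ proto, IsPatch (sub p)
  sub_proto : ∀ p ∈ proto, ∀ t ∈ sub p, ∃ q ∈ proto, ∃ x : Pt d, t = q.translate x
  sub_supp : ∀ p ∈ proto, psupp (sub p) = lam • p.carrier
  sub_translate : ∀ (t : Tile d) (x : Pt d),
    sub (t.translate x) = (fun s => s.translate (lam • x)) '' sub t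

namespace SubstSystem

variable {d : ℕ} (S : SubstSystem d)

/-- Tile-wise application of the substitution to a collection of tiles. -/
def subSet (P : Set (Tile d)) : Set (Tile d) := ⋃ t ∈ P, S.sub t

/-- Iterated substitution `ω^n` on collections of tiles. -/
def subIter (n : ℕ) (P : Set (Tile d)) : Set (Tile d) := (S.subSet)^[n] P

/-- `ω^n(t)` for a single tile `t`. -/
def omegan (n : ℕ) (t : Tile d) : Set (Tile d) := S.subIter n {t}

/-- The continuous hull `Ω`. -/
def Omega : Set (Set (Tile d)) :=
  {T | IsTilingOfSpace T ∧ ∀ P : Set (Tile d), P ⊆ T → IsPatch P →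
    ∃ n : ℕ, ∃ p ∈ S.proto, ∃ x : Pt d, P ⊆ translateSet (S.omegan n p) x}

/-- `x` is the puncture of the tile `t`, i.e. `t = p + x` for a prototile `p`. -/
def IsPuncture (t : Tile d) (x : Pt d) : Prop :=
  ∃ p ∈ S.proto, t = p.translate x

open Classical in
/-- The puncture `x(t)` of a tile `t` (chosen; unique for translates of prototiles). -/
def punc (t : Tile d) : Pt d :=
  if h : ∃ x : Pt d, S.IsPuncture t x then h.choose else 0

/-- The punctured hull (transversal) `Ω_punc`. -/
def OmegaPunc : Set (Set (Tile d)) :=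
  {T ∈ S.Omega | ∃ t ∈ T, S.IsPuncture t 0}

end SubstSystem

/-- The tiling metric. -/
def tilingDist {d : ℕ} (T T' : Set (Tile d)) : ℝ :=
  sInf ({1} ∪ {ε : ℝ | 0 < ε ∧ ∃ x x' : Pt d, ‖x‖ < ε ∧ ‖x'‖ < ε ∧
    tilesAt (translateSet T (-x)) (ball (0 : Pt d) (1 / ε)) =
      tilesAt (translateSet T' (-x')) (ball (0 : Pt d) (1 / ε))})

namespace SubstSystem

variable {d : ℕ} (S : SubstSystem d)

/-- Density of a family of tilings in `Ω_punc` w.r.t. the tiling metric. -/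
def DenseInPunc (E : Set (Set (Tile d))) : Prop :=
  ∀ T ∈ S.OmegaPunc, ∀ ε : ℝ, 0 < ε → ∃ T' ∈ E, tilingDist T T' < ε

/-- Openness of a subset of `Ω_punc` w.r.t. the tiling metric (subspace topology). -/
def OpenInPunc (E : Set (Set (Tile d))) : Prop :=
  E ⊆ S.OmegaPunc ∧ ∀ T ∈ E, ∃ ε : ℝ, 0 < ε ∧
    ∀ T' ∈ S.OmegaPunc, tilingDist T T' < ε → T' ∈ E

/-- The translational equivalence relation `R_punc` on `Ω_punc`. -/
def Rpunc : Set (Set (Tile d) × Set (Tile d)) :=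
  {TT | TT.1 ∈ S.OmegaPunc ∧ TT.2 ∈ S.OmegaPunc ∧ ∃ x : Pt d, TT.2 = translateSet TT.1 x}

/-- `Punc(n, p)`: the punctures of the tiles of `ω^n(p)`. -/
def Punc (n : ℕ) (p : Tile d) : Set (Pt d) :=
  {x | ∃ t ∈ S.omegan n p, S.IsPuncture t x}

/-- `E^n_p(x, y)`. -/
def Eset (n : ℕ) (p : Tile d) (x y : Pt d) : Set (Set (Tile d) × Set (Tile d)) :=
  {TT | ∃ T ∈ S.OmegaPunc, p ∈ T ∧
    TT.1 = translateSet (S.subIter n T) (-x) ∧ TT.2 = translateSet (S.subIter n T) (-y)}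

/-- `R_n`. -/
def Rn (n : ℕ) : Set (Set (Tile d) × Set (Tile d)) :=
  ⋃ p ∈ S.proto, ⋃ x ∈ S.Punc n p, ⋃ y ∈ S.Punc n p, S.Eset n p x y

/-- `R_AF = ∪ₙ R_n`. -/
def RAF : Set (Set (Tile d) × Set (Tile d)) := ⋃ n : ℕ, S.Rn n

/-- `U(P, t)`. -/
def Uset (P : Set (Tile d)) (t : Tile d) : Set (Set (Tile d)) :=
  {T ∈ S.OmegaPunc | translateSet P (-(S.punc t)) ⊆ T}

/-- `V(P, t₁, t₂)`. -/
def Vset (P : Set (Tile d)) (t₁ t₂ : Tile d) : Set (Set (Tile d) × Set (Tile d)) :=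
  {TT | TT.1 ∈ S.Uset P t₁ ∧ TT.2 = translateSet TT.1 (S.punc t₁ - S.punc t₂)}

/-- (A1) primitivity. -/
def Primitive : Prop :=
  ∃ N : ℕ, ∀ p ∈ S.proto, ∀ q ∈ S.proto, ∃ x : Pt d, Tile.translate q x ∈ S.omegan N p

/-- (A2) finite local complexity. -/
def FLC : Prop :=
  ∀ R : ℝ, 0 < R → ∃ Ps : Set (Set (Tile d)), Ps.Finite ∧
    ∀ P : Set (Tile d), IsPatch P → Metric.diam (psupp P) < R →
      (∃ T ∈ S.Omega, P ⊆ T) → ∃ P₀ ∈ Ps, ∃ x : Pt d, P = translateSet P₀ x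

/-- (A3) `ω : Ω → Ω` is bijective. -/
def SubBijective : Prop := Set.BijOn S.subSet S.Omega S.Omega

/-- (A4) `ω` forces its border. -/
def ForcesBorder : Prop :=
  ∃ n : ℕ, ∀ p ∈ S.proto, ∀ T ∈ S.Omega, ∀ T' ∈ S.Omega, ∀ x x' : Pt d,
    translateSet (S.omegan n p) x ⊆ T → translateSet (S.omegan n p) x' ⊆ T' →
    translateSet (tilesAt T ((fun y => y + x) '' psupp (S.omegan n p))) (-x) =
      translateSet (tilesAt T' ((fun y => y + x') '' psupp (S.omegan n p))) (-x')

/-- Prototile boundaries have box-counting dimension strictly less than `d`. -/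
def SmallBoundary : Prop :=
  ∃ c : ℝ, c < d ∧ ∃ K₀ : ℝ, ∀ p ∈ S.proto, ∀ ε : ℝ, 0 < ε →
    ∃ centers : Finset (Pt d), (centers.card : ℝ) ≤ K₀ * ε ^ (-c) ∧
      frontier p.carrier ⊆ ⋃ z ∈ centers, ball z ε

end SubstSystem

/-- A symmetry group action for `(𝒫, ω)`: `G ≤ O(d, ℝ)` acting on tiles, preserving
the prototile set and commuting with the substitution. -/
structure SymmAction {d : ℕ} (S : SubstSystem d) (G : Subgroup (Pt d ≃ₗᵢ[ℝ] Pt d)) where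
  act : G → Tile d → Tile d
  act_carrier : ∀ (g : G) (t : Tile d),
    (act g t).carrier = (g : Pt d ≃ₗᵢ[ℝ] Pt d) '' t.carrier
  act_one : ∀ t : Tile d, act 1 t = t
  act_mul : ∀ (g h : G) (t : Tile d), act (g * h) t = act g (act h t)
  act_proto : ∀ (g : G), ∀ p ∈ S.proto, act g p ∈ S.proto
  act_translate : ∀ (g : G) (t : Tile d) (x : Pt d),
    act g (t.translate x) = (act g t).translate ((g : Pt d ≃ₗᵢ[ℝ] Pt d) x)
  act_sub : ∀ (g : G), ∀ p ∈ S.proto, S.sub (act g p) = act g '' S.sub p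

/-- Action of a group element on a (partial) tiling: `gT = {gt : t ∈ T}`. -/
def SymmAction.actSet {d : ℕ} {S : SubstSystem d} {G : Subgroup (Pt d ≃ₗᵢ[ℝ] Pt d)}
    (σ : SymmAction S G) (g : G) (T : Set (Tile d)) : Set (Tile d) := σ.act g '' T

/-- `G` acts freely on the prototile set. -/
def SymmAction.FreeOnProto {d : ℕ} {S : SubstSystem d} {G : Subgroup (Pt d ≃ₗᵢ[ℝ] Pt d)}
    (σ : SymmAction S G) : Prop := ∀ g : G, ∀ p ∈ S.proto, σ.act g p = p → g = 1

/-- Composition of relations. -/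
def relComp {α : Type*} (R₁ R₂ : Set (α × α)) : Set (α × α) :=
  {q | ∃ z : α, (q.1, z) ∈ R₁ ∧ (z, q.2) ∈ R₂}

/-- Transpose (inverse) of a relation. -/
def relTrans {α : Type*} (R : Set (α × α)) : Set (α × α) := {q | (q.2, q.1) ∈ R}

end

/-!
Every tile of a tiling in `Ω` is a translate of a prototile, and no prototile is a translate
of another. By finite local complexity the patches `T(B_r(0))`, `T ∈ U(P, t₁)`, fall into
finitely many translation classes, and within a class the common tile `t₁` leaves only
finitely many possible translations.

Disjointness is rigidity: a tiling containing `T₀(B_r(0))` has exactly the tiles of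
`T₀(B_r(0))` meeting `B_r(0)`, since every tile is the closure of its interior and tiles have
disjoint interiors.
-/

open Filter Topology

namespace Tile

variable {d : ℕ}

theorem translate_carrier (t : Tile d) (x : Pt d) :
    (t.translate x).carrier = (· + x) '' t.carrier := rfl

theorem translate_translate (t : Tile d) (a b : Pt d) :
    (t.translate a).translate b = t.translate (a + b) := by
  simp only [translate, image_image, add_assoc]

@[simp]
theorem translate_zero (t : Tile d) : t.translate 0 = t := by
  simp [translate]

theorem interior_translate (t : Tile d) (x : Pt d) :
    interior (t.translate x).carrier = (· + x) '' interior t.carrier :=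
  ((Homeomorph.addRight x).image_interior t.carrier).symm

theorem translate_subset_closure_interior {t : Tile d}
    (h : t.carrier ⊆ closure (interior t.carrier)) (x : Pt d) :
    (t.translate x).carrier ⊆ closure (interior (t.translate x).carrier) := by
  rw [interior_translate, translate_carrier,
    ← show _ = closure ((· + x) '' interior t.carrier) from
      (Homeomorph.addRight x).image_closure _]
  exact image_mono h

theorem translate_left_injective (x : Pt d) : Function.Injective (Tile.translate · x) :=
  fun s t h => by simpa [translate_translate] using congrArg (Tile.translate · (-x)) h

theorem mem_interior_translate {q : Tile d} {ε : ℝ} (hq : ball 0 ε ⊆ interior q.carrier)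
    {x y : Pt d} (h : dist y x < ε) : y ∈ interior (q.translate x).carrier := by
  rw [interior_translate]
  exact ⟨y - x, hq (by rwa [mem_ball_zero_iff, ← dist_eq_norm]), sub_add_cancel y x⟩

theorem norm_sub_le_of_mem_translate {q : Tile d} {D : ℝ} (hq : q.carrier ⊆ closedBall 0 D)
    {x w : Pt d} (hw : w ∈ (q.translate x).carrier) : ‖w - x‖ ≤ D := by
  obtain ⟨c, hc, rfl⟩ := hw
  simpa using hq hc

theorem IsTile.nonempty {t : Tile d} (h : t.IsTile) : t.carrier.Nonempty := by
  obtain ⟨e⟩ := h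
  exact ⟨e.symm ⟨0, mem_closedBall_self zero_le_one⟩, Subtype.coe_prop _⟩

theorem IsTile.isCompact {t : Tile d} (h : t.IsTile) : IsCompact t.carrier := by
  obtain ⟨e⟩ := h
  have := isCompact_iff_compactSpace.mp (isCompact_closedBall (0 : Pt d) 1)
  exact isCompact_iff_compactSpace.mpr e.symm.compactSpace

end Tile

section

variable {d : ℕ}

theorem translateSet_zero (Q : Set (Tile d)) : translateSet Q 0 = Q := by
  simp [translateSet]

theorem mem_psupp {Q : Set (Tile d)} {z : Pt d} :
    z ∈ psupp Q ↔ ∃ t ∈ Q, z ∈ t.carrier := by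
  simp [psupp]

theorem psupp_translateSet (Q : Set (Tile d)) (a : Pt d) :
    psupp (translateSet Q a) = (· + a) '' psupp Q := by
  simp only [psupp, translateSet, biUnion_image, image_iUnion₂, Tile.translate_carrier]

theorem IsPartialTiling.subset {T Q : Set (Tile d)} (hT : IsPartialTiling T) (hQ : Q ⊆ T) :
    IsPartialTiling Q :=
  ⟨fun t ht => hT.1 t (hQ ht), fun t ht t' ht' => hT.2 t (hQ ht) t' (hQ ht')⟩

theorem subset_psupp_tilesAt {T : Set (Tile d)} (hT : IsTilingOfSpace T) (U : Set (Pt d)) :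
    U ⊆ psupp (tilesAt T U) := by
  intro y hy
  obtain ⟨t, ht, hyt⟩ := mem_psupp.mp (hT.2.symm ▸ mem_univ y : y ∈ psupp T)
  exact mem_psupp.mpr ⟨t, ⟨ht, y, hyt, hy⟩, hyt⟩

end

namespace SubstSystem

variable {d : ℕ} {S : SubstSystem d}

theorem translate_inj_of_mem_proto {q q' : Tile d} (hq : q ∈ S.proto) (hq' : q' ∈ S.proto)
    {x x' : Pt d} (h : q.translate x = q'.translate x') : q = q' ∧ x = x' := by
  have h' : q' = q.translate (x - x') := by
    rw [sub_eq_add_neg, ← Tile.translate_translate, h, Tile.translate_translate,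
      add_neg_cancel, Tile.translate_zero]
  obtain ⟨rfl, hx⟩ := S.proto_no_translate q hq q' hq' _ h'
  exact ⟨rfl, sub_eq_zero.mp hx⟩

theorem punc_translate {q : Tile d} (hq : q ∈ S.proto) (x : Pt d) :
    S.punc (q.translate x) = x := by
  have hex : ∃ w, S.IsPuncture (q.translate x) w := ⟨x, q, hq, rfl⟩
  rw [punc, dif_pos hex]
  obtain ⟨q', hq', heq⟩ := hex.choose_spec
  exact (translate_inj_of_mem_proto hq hq' heq).2.symm

theorem omegan_zero (p : Tile d) : S.omegan 0 p = {p} := rfl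

theorem omegan_succ (n : ℕ) (p : Tile d) : S.omegan (n + 1) p = S.subSet (S.omegan n p) :=
  Function.iterate_succ_apply' _ _ _

theorem exists_eq_translate_of_mem_sub_translate {q : Tile d} (hq : q ∈ S.proto)
    {x : Pt d} {t : Tile d} (ht : t ∈ S.sub (q.translate x)) :
    ∃ q' ∈ S.proto, ∃ x' : Pt d, t = q'.translate x' := by
  rw [S.sub_translate] at ht
  obtain ⟨s, hs, rfl⟩ := ht
  obtain ⟨q', hq', y, rfl⟩ := S.sub_proto q hq s hs
  exact ⟨q', hq', y + S.lam • x, Tile.translate_translate _ _ _⟩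

theorem exists_eq_translate_of_mem_omegan {p : Tile d} (hp : p ∈ S.proto) :
    ∀ (n : ℕ), ∀ t ∈ S.omegan n p, ∃ q ∈ S.proto, ∃ x : Pt d, t = q.translate x
  | 0, t, ht => ⟨p, hp, 0, by rw [(mem_singleton_iff.mp ht), Tile.translate_zero]⟩
  | n + 1, t, ht => by
    rw [omegan_succ, subSet, mem_iUnion₂] at ht
    obtain ⟨u, hu, htu⟩ := ht
    obtain ⟨q, hq, y, rfl⟩ := exists_eq_translate_of_mem_omegan hp n u hu
    exact exists_eq_translate_of_mem_sub_translate hq htu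

theorem isTile_of_mem_Omega {T : Set (Tile d)} (hT : T ∈ S.Omega) {t : Tile d} (ht : t ∈ T) :
    t.IsTile :=
  hT.1.1.1 t ht

theorem exists_eq_translate_of_mem_Omega {T : Set (Tile d)} (hT : T ∈ S.Omega) {t : Tile d}
    (ht : t ∈ T) : ∃ q ∈ S.proto, ∃ x : Pt d, t = q.translate x := by
  obtain ⟨n, p, hp, x, hsub⟩ := hT.2 {t} (singleton_subset_iff.mpr ht)
    ⟨hT.1.1.subset (singleton_subset_iff.mpr ht), finite_singleton t⟩
  obtain ⟨s, hs, rfl⟩ := hsub rfl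
  obtain ⟨q, hq, y, rfl⟩ := exists_eq_translate_of_mem_omegan hp n s hs
  exact ⟨q, hq, y + x, Tile.translate_translate _ _ _⟩

theorem psupp_sub_translate {q : Tile d} (hq : q ∈ S.proto) (x : Pt d) :
    psupp (S.sub (q.translate x)) = S.lam • (q.translate x).carrier := by
  rw [S.sub_translate, ← translateSet, psupp_translateSet, S.sub_supp q hq,
    Tile.translate_carrier, ← image_smul, ← image_smul, image_image, image_image]
  simp only [smul_add]

theorem psupp_omegan {p : Tile d} (hp : p ∈ S.proto) :
    ∀ n : ℕ, psupp (S.omegan n p) = S.lam ^ n • p.carrier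
  | 0 => by simp [omegan_zero, psupp]
  | n + 1 => by
    have hsub : ∀ t ∈ S.omegan n p, psupp (S.sub t) = S.lam • t.carrier := by
      intro t ht
      obtain ⟨q, hq, x, rfl⟩ := exists_eq_translate_of_mem_omegan hp n t ht
      exact psupp_sub_translate hq x
    calc psupp (S.omegan (n + 1) p) = ⋃ t ∈ S.omegan n p, S.lam • t.carrier := by
          simp only [omegan_succ, subSet, psupp, biUnion_iUnion]
          exact iUnion₂_congr fun t ht => by rw [← hsub t ht, psupp]
      _ = S.lam • psupp (S.omegan n p) := by rw [psupp, smul_set_iUnion₂]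
      _ = S.lam ^ (n + 1) • p.carrier := by rw [psupp_omegan hp n, smul_smul, pow_succ']

variable (S) in
theorem exists_ball_subset_interior_proto :
    ∃ ε > 0, ∀ q ∈ S.proto, ball (0 : Pt d) ε ⊆ interior q.carrier := by
  have hq : ∀ q ∈ S.proto,
      ∀ᶠ ε in 𝓝[>] (0 : ℝ), ball (0 : Pt d) ε ⊆ interior q.carrier := by
    intro q hq
    obtain ⟨ε, hε, hball⟩ := Metric.isOpen_iff.mp isOpen_interior 0 (S.proto_zero_mem q hq)
    filter_upwards [Ioo_mem_nhdsGT hε] with ε' hε'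
    exact (ball_subset_ball hε'.2.le).trans hball
  obtain ⟨ε, hε, hε0⟩ :=
    ((eventually_all_finite S.proto_finite).2 hq |>.and self_mem_nhdsWithin).exists
  exact ⟨ε, hε0, hε⟩

variable (S) in
theorem exists_proto_subset_closedBall :
    ∃ D, ∀ q ∈ S.proto, q.carrier ⊆ closedBall (0 : Pt d) D := by
  obtain ⟨D, hD⟩ := ((Bornology.isBounded_biUnion S.proto_finite).2 fun q hq =>
    (S.proto_isTile q hq).isCompact.isBounded).subset_closedBall 0
  exact ⟨D, fun q hq => (subset_biUnion_of_mem hq).trans hD⟩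

/-- `λ⁻ⁿ ω^n(p)` tiles `p` by tiles of size `O(λ⁻ⁿ)`, each with an interior point. -/
theorem proto_subset_closure_interior {p : Tile d} (hp : p ∈ S.proto) :
    p.carrier ⊆ closure (interior p.carrier) := by
  obtain ⟨D, hD⟩ := S.exists_proto_subset_closedBall
  intro y hy
  rw [Metric.mem_closure_iff]
  intro δ hδ
  obtain ⟨n, hn⟩ := pow_unbounded_of_one_lt (D / δ) S.one_lt_lam
  have hpow : 0 < S.lam ^ n := pow_pos (zero_lt_one.trans S.one_lt_lam) n
  have hy' : S.lam ^ n • y ∈ psupp (S.omegan n p) := by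
    rw [psupp_omegan hp]; exact smul_mem_smul_set hy
  obtain ⟨t, ht, hyt⟩ := mem_psupp.mp hy'
  obtain ⟨q, hq, x, rfl⟩ := exists_eq_translate_of_mem_omegan hp n t ht
  obtain ⟨c, hc, hcy⟩ := hyt
  have hx : x ∈ S.lam ^ n • interior p.carrier := by
    rw [← interior_smul₀ hpow.ne', ← psupp_omegan hp]
    refine interior_mono (subset_biUnion_of_mem (u := Tile.carrier) ht) ?_
    rw [Tile.interior_translate]
    exact ⟨0, S.proto_zero_mem q hq, zero_add x⟩
  obtain ⟨z, hz, rfl⟩ := hx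
  refine ⟨z, hz, ?_⟩
  have hdist : S.lam ^ n * dist y z ≤ D := by
    calc S.lam ^ n * dist y z = dist (S.lam ^ n • y) (S.lam ^ n • z) := by
          rw [dist_smul₀, Real.norm_of_nonneg hpow.le]
      _ = ‖c‖ := by rw [← hcy]; exact dist_add_self_left _ _
      _ ≤ D := by simpa using hD q hq hc
  rw [div_lt_iff₀ hδ] at hn
  nlinarith
theorem eq_of_dist_lt_of_dist_lt {T : Set (Tile d)} (hT : IsPartialTiling T) {ε : ℝ}
    (hε : ∀ q ∈ S.proto, ball (0 : Pt d) ε ⊆ interior q.carrier)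
    {q q' : Tile d} (hq : q ∈ S.proto) (hq' : q' ∈ S.proto) {x x' y : Pt d}
    (ht : q.translate x ∈ T) (ht' : q'.translate x' ∈ T)
    (hx : dist y x < ε) (hx' : dist y x' < ε) : q.translate x = q'.translate x' := by
  by_contra hne
  have hy : y ∈ interior (q.translate x).carrier ∩ interior (q'.translate x').carrier :=
    ⟨Tile.mem_interior_translate (hε q hq) hx, Tile.mem_interior_translate (hε q' hq') hx'⟩
  rwa [hT.2 _ ht _ ht' hne] at hy

theorem norm_punc_le_of_mem_tilesAt_ball {T : Set (Tile d)} (hT : T ∈ S.Omega) {D : ℝ}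
    (hD : ∀ q ∈ S.proto, q.carrier ⊆ closedBall (0 : Pt d) D) {R : ℝ} {t : Tile d}
    (ht : t ∈ tilesAt T (ball 0 R)) : ‖S.punc t‖ ≤ R + D := by
  obtain ⟨htT, w, hwt, hw⟩ := ht
  obtain ⟨q, hq, x, rfl⟩ := exists_eq_translate_of_mem_Omega hT htT
  rw [punc_translate hq]
  have := Tile.norm_sub_le_of_mem_translate (hD q hq) hwt
  have := norm_sub_norm_le x w
  rw [mem_ball_zero_iff] at hw
  linarith [norm_sub_rev w x]

/-- An `ε`-ball contains the puncture of at most one tile, and finitely many such balls cover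
the punctures of the tiles meeting `B_R(0)`. -/
theorem finite_tilesAt_ball {T : Set (Tile d)} (hT : T ∈ S.Omega) (R : ℝ) :
    (tilesAt T (ball (0 : Pt d) R)).Finite := by
  obtain ⟨ε, hε, hεint⟩ := S.exists_ball_subset_interior_proto
  obtain ⟨D, hD⟩ := S.exists_proto_subset_closedBall
  obtain ⟨C, hC, hcover⟩ :=
    totallyBounded_iff.mp (isCompact_closedBall (0 : Pt d) (R + D)).totallyBounded ε hε
  have hsub : tilesAt T (ball 0 R) ⊆
      ⋃ y ∈ C, {t ∈ tilesAt T (ball 0 R) | dist y (S.punc t) < ε} := by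
    intro t ht
    obtain ⟨y, hy, hty⟩ := mem_iUnion₂.mp
      (hcover (mem_closedBall_zero_iff.mpr (norm_punc_le_of_mem_tilesAt_ball hT hD ht)))
    exact mem_iUnion₂.mpr ⟨y, hy, ht, by rwa [dist_comm]⟩
  refine (hC.biUnion fun y _ => Subsingleton.finite ?_).subset hsub
  rintro t ⟨ht, hyt⟩ t' ⟨ht', hyt'⟩
  obtain ⟨q, hq, x, rfl⟩ := exists_eq_translate_of_mem_Omega hT ht.1
  obtain ⟨q', hq', x', rfl⟩ := exists_eq_translate_of_mem_Omega hT ht'.1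
  rw [punc_translate hq] at hyt
  rw [punc_translate hq'] at hyt'
  exact eq_of_dist_lt_of_dist_lt hT.1.1 hεint hq hq' ht.1 ht'.1 hyt hyt'

theorem isPatch_tilesAt_ball {T : Set (Tile d)} (hT : T ∈ S.Omega) (R : ℝ) :
    IsPatch (tilesAt T (ball (0 : Pt d) R)) :=
  ⟨hT.1.1.subset fun _ ht => ht.1, finite_tilesAt_ball hT R⟩

variable (S) in
theorem exists_diam_psupp_tilesAt_ball_lt (r : ℝ) :
    ∃ R > 0, ∀ T ∈ S.Omega, diam (psupp (tilesAt T (ball (0 : Pt d) r))) < R := by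
  obtain ⟨D, hD⟩ := S.exists_proto_subset_closedBall
  refine ⟨2 * max (r + 2 * D) 0 + 1, by positivity, fun T hT => ?_⟩
  have hsub : psupp (tilesAt T (ball 0 r)) ⊆ closedBall (0 : Pt d) (max (r + 2 * D) 0) := by
    intro w hw
    obtain ⟨t, ht, hwt⟩ := mem_psupp.mp hw
    obtain ⟨q, hq, x, rfl⟩ := exists_eq_translate_of_mem_Omega hT ht.1
    have hx := norm_punc_le_of_mem_tilesAt_ball hT hD ht
    rw [punc_translate hq] at hx
    have := Tile.norm_sub_le_of_mem_translate (hD q hq) hwt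
    have := norm_le_norm_add_norm_sub' w x
    rw [mem_closedBall_zero_iff]
    linarith [le_max_left (r + 2 * D) 0]
  linarith [diam_le_of_subset_closedBall (le_max_right _ _) hsub]

theorem finite_setOf_mem_translateSet {P₀ : Set (Tile d)} (hP₀ : P₀.Finite) {q : Tile d}
    (hq : q ∈ S.proto) (x : Pt d) : {v | q.translate x ∈ translateSet P₀ v}.Finite := by
  have hsub : {v | q.translate x ∈ translateSet P₀ v} ⊆
      ⋃ s ∈ P₀, {v | s.translate v = q.translate x} := by
    rintro v ⟨s, hs, hsv⟩
    exact mem_iUnion₂.mpr ⟨s, hs, hsv⟩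
  refine (hP₀.biUnion fun s _ => Subsingleton.finite ?_).subset hsub
  intro v hv v' hv'
  have h : q.translate (x + (v' - v)) = q.translate x :=
    calc q.translate (x + (v' - v)) = (s.translate v).translate (v' - v) := by
          rw [hv.out, Tile.translate_translate]
      _ = q.translate x := by rw [Tile.translate_translate, add_sub_cancel, hv'.out]
  exact (sub_eq_zero.mp (by simpa using (translate_inj_of_mem_proto hq hq h).2)).symm

theorem subset_closure_interior_of_mem_Omega {T : Set (Tile d)} (hT : T ∈ S.Omega)
    {t : Tile d} (ht : t ∈ T) : t.carrier ⊆ closure (interior t.carrier) := by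
  obtain ⟨q, hq, x, rfl⟩ := exists_eq_translate_of_mem_Omega hT ht
  exact Tile.translate_subset_closure_interior (proto_subset_closure_interior hq) x

theorem tilesAt_eq_of_tilesAt_subset {T T₀ : Set (Tile d)} (hT : T ∈ S.Omega)
    (hT₀ : T₀ ∈ S.Omega) {U : Set (Pt d)} (hU : IsOpen U) (hsub : tilesAt T₀ U ⊆ T) :
    tilesAt T U = tilesAt T₀ U := by
  refine Subset.antisymm ?_ fun s hs => ⟨hsub hs, hs.2⟩
  rintro t ⟨htT, y, hyt, hyU⟩
  obtain ⟨z, hzU, hzt⟩ :=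
    _root_.mem_closure_iff.mp (subset_closure_interior_of_mem_Omega hT htT hyt) U hU hyU
  obtain ⟨s, hs, hzs⟩ := mem_psupp.mp (subset_psupp_tilesAt hT₀.1 U hzU)
  obtain ⟨w, hwt, hws⟩ := _root_.mem_closure_iff.mp
    (subset_closure_interior_of_mem_Omega hT₀ hs.1 hzs) _ isOpen_interior hzt
  by_contra hts
  have hw : w ∈ interior t.carrier ∩ interior s.carrier := ⟨hwt, hws⟩
  rwa [hT.1.1.2 t htT s (hsub hs) (ne_of_mem_of_not_mem hs hts).symm] at hw

theorem finite_image_tilesAt_ball (hA2 : S.FLC) {𝒰 : Set (Set (Tile d))}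
    (h𝒰 : 𝒰 ⊆ S.Omega) {t : Tile d} (r : ℝ) (ht : ∀ T ∈ 𝒰, t ∈ tilesAt T (ball 0 r)) :
    ((fun T => tilesAt T (ball (0 : Pt d) r)) '' 𝒰).Finite := by
  rcases 𝒰.eq_empty_or_nonempty with rfl | ⟨T₀, hT₀⟩
  · simp
  obtain ⟨q, hq, x, rfl⟩ := exists_eq_translate_of_mem_Omega (h𝒰 hT₀) (ht T₀ hT₀).1
  obtain ⟨R, hR, hdiam⟩ := S.exists_diam_psupp_tilesAt_ball_lt r
  obtain ⟨Ps, hPs, hclass⟩ := hA2 R hR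
  refine ((hPs.subset (sep_subset Ps Set.Finite)).biUnion fun P₀ hP₀ =>
    (finite_setOf_mem_translateSet hP₀.2 hq x).image (translateSet P₀)).subset ?_
  rintro _ ⟨T, hT, rfl⟩
  have hTΩ := h𝒰 hT
  obtain ⟨P₀, hP₀, v, hv⟩ :=
    hclass _ (isPatch_tilesAt_ball hTΩ r) (hdiam T hTΩ) ⟨T, hTΩ, fun _ h => h.1⟩
  have hfin := finite_tilesAt_ball hTΩ r
  rw [hv] at hfin
  have hqx := ht T hT
  rw [hv] at hqx
  have hP₀fin := hfin.of_finite_image (Tile.translate_left_injective v).injOn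
  exact mem_iUnion₂.mpr ⟨P₀, ⟨hP₀, hP₀fin⟩, v, hqx, hv.symm⟩

theorem mem_Uset_of_punc_eq_zero {t : Tile d} (ht : S.punc t = 0) {P T : Set (Tile d)} :
    T ∈ S.Uset P t ↔ T ∈ S.OmegaPunc ∧ P ⊆ T := by
  simp [Uset, ht, translateSet_zero]

theorem subset_tilesAt_of_mem_Uset {t : Tile d} (ht : S.punc t = 0) {P T : Set (Tile d)}
    {U : Set (Pt d)} (hP : psupp P ⊆ U)
    (hT : T ∈ S.Uset P t) : P ⊆ tilesAt T U := by
  intro s hs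
  have hsT := ((mem_Uset_of_punc_eq_zero ht).1 hT).2 hs
  obtain ⟨z, hz⟩ := (isTile_of_mem_Omega hT.1.1 hsT).nonempty
  exact ⟨hsT, z, hz, hP (mem_psupp.mpr ⟨s, hs, hz⟩)⟩

theorem mem_Uset_tilesAt {t : Tile d} (ht : S.punc t = 0) {T : Set (Tile d)}
    (hT : T ∈ S.OmegaPunc) (U : Set (Pt d)) :
    T ∈ S.Uset (tilesAt T U) t :=
  (mem_Uset_of_punc_eq_zero ht).2 ⟨hT, fun _ hs => hs.1⟩

theorem Uset_tilesAt_subset {t : Tile d} (ht : S.punc t = 0) {P T : Set (Tile d)}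
    {U : Set (Pt d)} (hP : psupp P ⊆ U)
    (hT : T ∈ S.Uset P t) : S.Uset (tilesAt T U) t ⊆ S.Uset P t := fun _ hT' =>
  have hT' := (mem_Uset_of_punc_eq_zero ht).1 hT'
  (mem_Uset_of_punc_eq_zero ht).2 ⟨hT'.1, (subset_tilesAt_of_mem_Uset ht hP hT).trans hT'.2⟩

theorem tilesAt_eq_of_mem_Uset {t : Tile d} (ht : S.punc t = 0) {T T₀ : Set (Tile d)}
    {U : Set (Pt d)} (hU : IsOpen U)
    (hT₀ : T₀ ∈ S.Omega) (hT : T ∈ S.Uset (tilesAt T₀ U) t) :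
    tilesAt T U = tilesAt T₀ U :=
  tilesAt_eq_of_tilesAt_subset hT.1.1 hT₀ hU ((mem_Uset_of_punc_eq_zero ht).1 hT).2

theorem Vset_mono {P P' : Set (Tile d)} {t₁ : Tile d} (h : S.Uset P t₁ ⊆ S.Uset P' t₁)
    (t₂ : Tile d) : S.Vset P t₁ t₂ ⊆ S.Vset P' t₁ t₂ :=
  fun _ hTT => ⟨h hTT.1, hTT.2⟩

end SubstSystem

open SubstSystem

theorem stmt7_general {d : ℕ} (S : SubstSystem d) (hA2 : S.FLC)
    (P : Set (Tile d))
    (t₁ : Tile d) (ht₁ : t₁ ∈ P) (t₂ : Tile d)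
    (hx₁ : S.punc t₁ = 0)
    (r : ℝ) (hsupp : psupp P ⊆ Metric.ball (0 : Pt d) r) :
    (((fun T => tilesAt T (Metric.ball (0 : Pt d) r)) '' S.Uset P t₁).Finite) ∧
    (S.Vset P t₁ t₂ =
      ⋃ P' ∈ (fun T => tilesAt T (Metric.ball (0 : Pt d) r)) '' S.Uset P t₁,
        S.Vset P' t₁ t₂) ∧
    ∀ P₁ ∈ (fun T => tilesAt T (Metric.ball (0 : Pt d) r)) '' S.Uset P t₁,
      ∀ P₂ ∈ (fun T => tilesAt T (Metric.ball (0 : Pt d) r)) '' S.Uset P t₁,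
        P₁ ≠ P₂ → S.Vset P₁ t₁ t₂ ∩ S.Vset P₂ t₁ t₂ = ∅ := by
  refine ⟨finite_image_tilesAt_ball hA2 (fun T hT => hT.1.1) r fun T hT =>
    subset_tilesAt_of_mem_Uset hx₁ hsupp hT ht₁, ?_, ?_⟩
  · refine Subset.antisymm (fun TT hTT => mem_biUnion (mem_image_of_mem _ hTT.1)
      ⟨mem_Uset_tilesAt hx₁ hTT.1.1 _, hTT.2⟩) ?_
    simp only [iUnion_subset_iff, forall_mem_image]
    exact fun T hT => Vset_mono (Uset_tilesAt_subset hx₁ hsupp hT) t₂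
  · rintro _ ⟨T₁, hT₁, rfl⟩ _ ⟨T₂, hT₂, rfl⟩ hne
    refine eq_empty_of_forall_notMem fun TT ⟨⟨h₁, _⟩, ⟨h₂, _⟩⟩ => hne ?_
    exact (tilesAt_eq_of_mem_Uset hx₁ isOpen_ball hT₁.1.1 h₁).symm.trans
      (tilesAt_eq_of_mem_Uset hx₁ isOpen_ball hT₂.1.1 h₂)

/-- Lemma 4.1: For a patch `P` with `t₁, t₂ ∈ P`, `x(t₁) = 0` and
`supp(P) ⊆ B_r(0)`, the set `Y = {T(B_r(0)) : T ∈ U(P, t₁)}` is finite and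
`V(P, t₁, t₂)` is the disjoint union of the `V(P', t₁, t₂)`, `P' ∈ Y`. -/
theorem stmt7 {d : ℕ} (hd : 1 ≤ d) (S : SubstSystem d) (hA2 : S.FLC)
    (P : Set (Tile d)) (hP : IsPatch P) (hPT : ∃ T ∈ S.Omega, P ⊆ T)
    (t₁ : Tile d) (ht₁ : t₁ ∈ P) (t₂ : Tile d) (ht₂ : t₂ ∈ P)
    (hx₁ : S.punc t₁ = 0)
    (r : ℝ) (hr : 0 < r) (hsupp : psupp P ⊆ Metric.ball (0 : Pt d) r) :
    (((fun T => tilesAt T (Metric.ball (0 : Pt d) r)) '' S.Uset P t₁).Finite) ∧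
    (S.Vset P t₁ t₂ =
      ⋃ P' ∈ (fun T => tilesAt T (Metric.ball (0 : Pt d) r)) '' S.Uset P t₁,
        S.Vset P' t₁ t₂) ∧
    ∀ P₁ ∈ (fun T => tilesAt T (Metric.ball (0 : Pt d) r)) '' S.Uset P t₁,
      ∀ P₂ ∈ (fun T => tilesAt T (Metric.ball (0 : Pt d) r)) '' S.Uset P t₁,
        P₁ ≠ P₂ → S.Vset P₁ t₁ t₂ ∩ S.Vset P₂ t₁ t₂ = ∅ :=
  stmt7_general S hA2 P t₁ ht₁ t₂ hx₁ r hsupp
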